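/- Let u > 1 be real, let h ≥ 1, let e_ℓ and e_k (for finitely many k ≠ ℓ) be integers with e_ℓ > ∑_{k≠ℓ} |e_k|, and suppose ∑_k e_k u^k = 0. Then for every finitely supported integer sequence (a_k), the value ||q'|| := ∑_k |a'_k| strictly decreases when one replaces q = ∑ a_k x^k by q' = q ∓ x^{m−ℓ}·(∑ e_k x^k) at an index m with |a_m| ≥ e_ℓ (subtracting when a_m > 0, adding when a_m < 0); consequently, iterating this process terminates with a representation ∑ a_k u^k of the same real value in which all coefficients satisfy |a_k| < e_ℓ. -/
import Mathlib

noncomputable def laurentEval (a : ℤ →₀ ℤ) (u : ℝ) : ℝ :=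
  a.sum fun k v => (v : ℝ) * u ^ k

lemma laurentEval_sub (a b : ℤ →₀ ℤ) (u : ℝ) :
    laurentEval (a - b) u = laurentEval a u - laurentEval b u := by
  unfold laurentEval
  exact Finsupp.sum_sub_index fun k b₁ b₂ => by push_cast; ring

lemma laurentEval_zero (u : ℝ) : laurentEval 0 u = 0 := by
  simp [laurentEval]

lemma laurentEval_neg (a : ℤ →₀ ℤ) (u : ℝ) : laurentEval (-a) u = -laurentEval a u := by
  have := laurentEval_sub 0 a u
  simpa [laurentEval_zero] using this

lemma laurentEval_mapDomain (e : ℤ →₀ ℤ) (d : ℤ) (u : ℝ) (hu : u ≠ 0) :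
    laurentEval (e.mapDomain (fun k => k + d)) u = u ^ d * laurentEval e u := by
  unfold laurentEval
  rw [Finsupp.sum_mapDomain_index (by simp) (by intros; push_cast; ring),
    Finsupp.mul_sum]
  refine Finsupp.sum_congr fun k _ => ?_
  rw [zpow_add₀ hu]; ring

lemma absSum_nonneg (a : ℤ →₀ ℤ) : 0 ≤ a.sum fun _ v => |v| :=
  Finset.sum_nonneg fun _ _ => abs_nonneg _

lemma key_dec (e : ℤ →₀ ℤ) (ℓ : ℤ)
    (hdom : (∑ k ∈ e.support.erase ℓ, |e k|) < e ℓ)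
    (a : ℤ →₀ ℤ) (m : ℤ) (ham : e ℓ ≤ |a m|) :
    ((a - (Int.sign (a m)) • e.mapDomain (fun k => k + (m - ℓ))).sum fun _ v => |v|)
      < a.sum fun _ v => |v| := by
  have hepos : 0 < e ℓ :=
    lt_of_le_of_lt (Finset.sum_nonneg fun _ _ => abs_nonneg _) hdom
  have ham0 : a m ≠ 0 := by
    intro h0; rw [h0] at ham; simp at ham; omega
  set f : ℤ → ℤ := fun k => k + (m - ℓ) with hfdef
  have hf : Function.Injective f := fun x y hxy => by simp [hfdef] at hxy; omega
  set s : ℤ := Int.sign (a m) with hsdef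
  have hs : s = 1 ∨ s = -1 := by
    rcases lt_trichotomy (a m) 0 with h1 | h1 | h1
    · right; rw [hsdef, Int.sign_eq_neg_one_iff_neg]; exact h1
    · exact absurd h1 ham0
    · left; rw [hsdef, Int.sign_eq_one_iff_pos]; exact h1
  set c : ℤ →₀ ℤ := e.mapDomain f with hcdef
  set b : ℤ →₀ ℤ := a - s • c with hbdef
  have hbk : ∀ k, b k = a k - s * c k := fun k => by
    simp [hbdef, Finsupp.sub_apply]
  have hcm : c m = e ℓ := by
    have : m = f ℓ := by simp [hfdef]
    rw [this, hcdef, Finsupp.mapDomain_apply hf]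
  -- common support
  set S : Finset ℤ := a.support ∪ c.support with hSdef
  have hbsupp : b.support ⊆ S := by
    refine (Finsupp.support_sub).trans (Finset.union_subset_union (le_refl _) ?_)
    exact Finsupp.support_smul
  have hasupp : a.support ⊆ S := Finset.subset_union_left
  have hcsupp : c.support ⊆ S := Finset.subset_union_right
  have hmS : m ∈ S := hasupp (Finsupp.mem_support_iff.mpr ham0)
  have hsa : (a.sum fun _ v => |v|) = ∑ k ∈ S, |a k| :=
    Finsupp.sum_of_support_subset a hasupp _ (by simp)
  have hsb : (b.sum fun _ v => |v|) = ∑ k ∈ S, |b k| :=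
    Finsupp.sum_of_support_subset b hbsupp _ (by simp)
  rw [hsa, hsb, ← Finset.add_sum_erase S _ hmS, ← Finset.add_sum_erase S (fun k => |a k|) hmS]
  -- |b m| = |a m| - e ℓ
  have hbm : |b m| = |a m| - e ℓ := by
    rw [hbk, hcm]
    rcases lt_trichotomy (a m) 0 with h1 | h1 | h1
    · have : s = -1 := Int.sign_eq_neg_one_iff_neg.mpr h1
      rw [this, abs_of_neg h1, abs_of_nonpos (by nlinarith [abs_of_neg h1])]
      ring
    · exact absurd h1 ham0
    · have : s = 1 := Int.sign_eq_one_iff_pos.mpr h1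
      rw [this, abs_of_pos h1, abs_of_nonneg (by nlinarith [abs_of_pos h1])]
      ring
  rw [hbm]
  -- tail estimate
  have htail : ∑ k ∈ S.erase m, |b k| ≤ (∑ k ∈ S.erase m, |a k|) + ∑ k ∈ S.erase m, |c k| := by
    rw [← Finset.sum_add_distrib]
    refine Finset.sum_le_sum fun k _ => ?_
    rw [hbk]
    calc |a k - s * c k| ≤ |a k| + |s * c k| := abs_sub _ _
      _ = |a k| + |c k| := by rcases hs with h | h <;> rw [h] <;> simp
  have hcsum : ∑ k ∈ S.erase m, |c k| = ∑ k ∈ e.support.erase ℓ, |e k| := by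
    have h1 : ∑ k ∈ S.erase m, |c k| = ∑ k ∈ c.support.erase m, |c k| := by
      refine (Finset.sum_subset (Finset.erase_subset_erase m hcsupp) ?_).symm
      intro k hk hk2
      have : k ∉ c.support := by
        intro hc; exact hk2 (Finset.mem_erase.mpr ⟨(Finset.mem_erase.mp hk).1, hc⟩)
      simp [Finsupp.notMem_support_iff.mp this]
    rw [h1]
    have h2 : c.support = e.support.image f := Finsupp.mapDomain_support_of_injective hf e
    have h3 : m = f ℓ := by simp [hfdef]
    rw [h2, h3, ← Finset.image_erase hf]
    rw [Finset.sum_image (fun x _ y _ hxy => hf hxy)]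
    refine Finset.sum_congr rfl fun k _ => ?_
    rw [hcdef, Finsupp.mapDomain_apply hf]
  have : ∑ k ∈ S.erase m, |c k| < e ℓ := by rw [hcsum]; exact hdom
  linarith

theorem stmt_18 (u : ℝ) (hu : 1 < u) (h : ℕ) (hh : 1 ≤ h) (e : ℤ →₀ ℤ) (ℓ : ℤ)
    (hdom : (∑ k ∈ e.support.erase ℓ, |e k|) < e ℓ)
    (hzero : laurentEval e u = 0) :
    (∀ (a : ℤ →₀ ℤ) (m : ℤ), e ℓ ≤ |a m| →
      ((a - (Int.sign (a m)) • e.mapDomain (fun k => k + (m - ℓ))).sum fun _ v => |v|)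
        < (a.sum fun _ v => |v|) ∧
      laurentEval (a - (Int.sign (a m)) • e.mapDomain (fun k => k + (m - ℓ))) u
        = laurentEval a u) ∧
    (∀ a : ℤ →₀ ℤ, ∃ a' : ℤ →₀ ℤ,
      laurentEval a' u = laurentEval a u ∧ ∀ k, |a' k| < e ℓ) := by
  have hu0 : u ≠ 0 := by positivity
  have heval : ∀ (a : ℤ →₀ ℤ) (m : ℤ),
      laurentEval (a - (Int.sign (a m)) • e.mapDomain (fun k => k + (m - ℓ))) u
        = laurentEval a u := by
    intro a m
    rw [laurentEval_sub]
    have hc : laurentEval (e.mapDomain (fun k => k + (m - ℓ))) u = 0 := by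
      rw [laurentEval_mapDomain e _ u hu0, hzero, mul_zero]
    rcases lt_trichotomy (a m) 0 with h1 | h1 | h1
    · rw [Int.sign_eq_neg_one_iff_neg.mpr h1, neg_one_zsmul, laurentEval_neg, hc,
        neg_zero, sub_zero]
    · rw [h1, Int.sign_zero, zero_smul, laurentEval_zero, sub_zero]
    · rw [Int.sign_eq_one_iff_pos.mpr h1, one_smul, hc, sub_zero]
  constructor
  · intro a m ham
    exact ⟨key_dec e ℓ hdom a m ham, heval a m⟩
  · have main : ∀ n : ℕ, ∀ a : ℤ →₀ ℤ, (a.sum fun _ v => |v|).toNat ≤ n →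
        ∃ a' : ℤ →₀ ℤ, laurentEval a' u = laurentEval a u ∧ ∀ k, |a' k| < e ℓ := by
      intro n
      induction n with
      | zero =>
        intro a ha
        by_cases hc : ∀ k, |a k| < e ℓ
        · exact ⟨a, rfl, hc⟩
        · push_neg at hc
          obtain ⟨m, hm⟩ := hc
          have h1 := key_dec e ℓ hdom a m hm
          have h2 := absSum_nonneg (a - (Int.sign (a m)) • e.mapDomain (fun k => k + (m - ℓ)))
          have h3 := absSum_nonneg a
          omega
      | succ n ih =>
        intro a ha
        by_cases hc : ∀ k, |a k| < e ℓ
        · exact ⟨a, rfl, hc⟩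
        · push_neg at hc
          obtain ⟨m, hm⟩ := hc
          set b := a - (Int.sign (a m)) • e.mapDomain (fun k => k + (m - ℓ)) with hb
          have h1 : (b.sum fun _ v => |v|) < a.sum fun _ v => |v| := key_dec e ℓ hdom a m hm
          have h2 := absSum_nonneg b
          have h3 := absSum_nonneg a
          obtain ⟨a', ha1, ha2⟩ := ih b (by omega)
          exact ⟨a', by rw [ha1, hb, heval a m], ha2⟩
    intro a
    exact main (a.sum fun _ v => |v|).toNat a le_rfl
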